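/- arXiv:1704.03596 — 4 statements merged into one kernel-verified Lean document; each statement's English description precedes it below -/
import Mathlib

section
/- If Q is a finite set of points strictly inside a triangle uvw, all lying on one side of the line through u and v, then the edge uv is an edge of the convex hull of Q ∪ {u, v}, and removing uv from the convex hull boundary yields a convex chain from u to v contained in triangle uvw whose region between the chain and the two sides uw, wv contains no point of Q. -/
open Real Set

noncomputable section

namespace CHT6

/-- Points in the plane. -/
abbrev Pt := ℝ × ℝ

/-- Euclidean distance. -/
def dst (p q : Pt) : ℝ := Real.sqrt ((p.1 - q.1) ^ 2 + (p.2 - q.2) ^ 2)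

/-- Unsigned angle at `q` between segments `qp` and `qr`. -/
def ang (p q r : Pt) : ℝ :=
  Real.arccos (((p.1 - q.1) * (r.1 - q.1) + (p.2 - q.2) * (r.2 - q.2)) / (dst p q * dst r q))

/-- 2D cross product. -/
def crossP (a b : Pt) : ℝ := a.1 * b.2 - a.2 * b.1

/-- The segments `ab` and `cd` properly cross: their relative interiors meet. -/
def PCross (a b c d : Pt) : Prop := (openSegment ℝ a b ∩ openSegment ℝ c d).Nonempty

/-- `uz` is a constraint of `S`. -/
def Constr (S : Set (Pt × Pt)) (u z : Pt) : Prop := (u, z) ∈ S ∨ (z, u) ∈ S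

/-- `u` and `v` see each other: `uv` is a constraint or no constraint properly crosses it. -/
def CanSee (S : Set (Pt × Pt)) (u v : Pt) : Prop :=
  Constr S u v ∨ ∀ c ∈ S, ¬ PCross c.1 c.2 u v

/-- Rotation of the plane by angle `θ` about the origin. -/
def rot (θ : ℝ) (p : Pt) : Pt :=
  (Real.cos θ * p.1 - Real.sin θ * p.2, Real.sin θ * p.1 + Real.cos θ * p.2)

/-- `p` relative to `u`, rotated so that the positive cone `Cᵢ` becomes the upward cone. -/
def rel (i : ℕ) (u p : Pt) : Pt := rot (-(2 * Real.pi * i / 3)) (p - u)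

/-- `p` lies in the (open) positive cone `Cᵢ` of `u` (width π/3; `C₀` is upward vertical). -/
def inPos (i : ℕ) (u p : Pt) : Prop := Real.sqrt 3 * |(rel i u p).1| < (rel i u p).2

/-- `p` lies in the negative cone `C̄ᵢ` of `u`. -/
def inNeg (i : ℕ) (u p : Pt) : Prop := inPos i p u

/-- Length of the projection of `p` onto the bisector of the positive cone `Cᵢ` of `u`. -/
def projLen (i : ℕ) (u p : Pt) : ℝ := (rel i u p).2

/-- Projected distance of `p` from `u` for the negative cone `C̄ᵢ` of `u`. -/
def negProj (i : ℕ) (u p : Pt) : ℝ := projLen i p u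

/-- `p` and `q` are not strictly separated, within the cone `cone` at `u`, by a constraint
incident to `u`: they lie in a common (closed) subcone. -/
def SameSubIn (cone : Pt → Pt → Prop) (S : Set (Pt × Pt)) (u p q : Pt) : Prop :=
  ∀ z, Constr S u z → cone u z →
    ¬ (crossP (z - u) (p - u) * crossP (z - u) (q - u) < 0)

def SameSubPos (S : Set (Pt × Pt)) (i : ℕ) (u p q : Pt) : Prop := SameSubIn (inPos i) S u p q

def SameSubNeg (S : Set (Pt × Pt)) (i : ℕ) (u p q : Pt) : Prop := SameSubIn (inNeg i) S u p q

/-- General position: no two points of `P` define a line parallel to one of the six cone rays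
(slopes `0`, `√3`, `-√3`), and no three points of `P` are collinear. -/
def GenPos (P : Set Pt) : Prop :=
  (∀ p ∈ P, ∀ q ∈ P, p ≠ q →
    p.2 ≠ q.2 ∧ q.2 - p.2 ≠ Real.sqrt 3 * (q.1 - p.1) ∧
      q.2 - p.2 ≠ -(Real.sqrt 3 * (q.1 - p.1))) ∧
  (∀ p ∈ P, ∀ q ∈ P, ∀ r ∈ P, p ≠ q → q ≠ r → p ≠ r → ¬ Collinear ℝ ({p, q, r} : Set Pt))

/-- `v` is, among the vertices visible from `u` in the positive subcone of `u` containing `v`,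
the one minimizing the projection onto the cone bisector: `u` adds the edge `uv`. -/
def EdgeDir (P : Set Pt) (S : Set (Pt × Pt)) (u v : Pt) : Prop :=
  u ∈ P ∧ v ∈ P ∧ ∃ i < 3, inPos i u v ∧ CanSee S u v ∧
    ∀ w ∈ P, w ≠ u → inPos i u w → CanSee S u w → SameSubPos S i u v w →
      projLen i u v ≤ projLen i u w

/-- Edges of the constrained half-θ₆-graph. -/
def HEdge (P : Set Pt) (S : Set (Pt × Pt)) (u v : Pt) : Prop :=
  EdgeDir P S u v ∨ EdgeDir P S v u

/-- `f` is a path in the graph with edge relation `E`. -/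
def IsPath (E : Pt → Pt → Prop) {n : ℕ} (f : Fin (n + 1) → Pt) : Prop :=
  ∀ j : Fin n, E (f j.castSucc) (f j.succ)

/-- Euclidean length of a polygonal path. -/
def pathLen {n : ℕ} (f : Fin (n + 1) → Pt) : ℝ :=
  ∑ j : Fin n, dst (f j.castSucc) (f j.succ)

/-- `x` is a vertex of the canonical sequence of `u` in the negative cone `C̄ᵘᵢ`. -/
def CanonVert (P : Set Pt) (S : Set (Pt × Pt)) (i : ℕ) (u x : Pt) : Prop :=
  x ∈ P ∧ HEdge P S u x ∧ inNeg i u x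

/-- `v` and `w` are consecutive (in counterclockwise order) vertices of the canonical path of
`u` in a subcone of the negative cone `C̄ᵘᵢ`. -/
def ConsecCanon (P : Set Pt) (S : Set (Pt × Pt)) (i : ℕ) (u v w : Pt) : Prop :=
  CanonVert P S i u v ∧ CanonVert P S i u w ∧ SameSubNeg S i u v w ∧
  crossP (v - u) (w - u) > 0 ∧
  ∀ x ∈ P, CanonVert P S i u x → SameSubNeg S i u v x →
    ¬ (crossP (v - u) (x - u) > 0 ∧ crossP (x - u) (w - u) > 0)

/-- `x` is a closest canonical vertex of `u` in (a subcone of) the negative cone `C̄ᵘᵢ`,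
distances being measured by projection onto the cone bisector. -/
def ClosestCanon (P : Set Pt) (S : Set (Pt × Pt)) (i : ℕ) (u x : Pt) : Prop :=
  CanonVert P S i u x ∧
  ∀ y ∈ P, CanonVert P S i u y → SameSubNeg S i u x y → negProj i u x ≤ negProj i u y

/-- Edges of the bounded-degree graph `G₉`: canonical-path edges together with, for each
negative subcone, the edge to the closest canonical vertex. -/
def G9Edge (P : Set Pt) (S : Set (Pt × Pt)) (a b : Pt) : Prop :=
  (∃ u ∈ P, ∃ i < 3, ConsecCanon P S i u a b ∨ ConsecCanon P S i u b a) ∨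
  (∃ i < 3, ClosestCanon P S i a b ∨ ClosestCanon P S i b a)

/-- Coordinate of `p` along the right boundary direction `(1/2, √3/2)` of the upward cone. -/
def coordA (p : Pt) : ℝ := p.1 + p.2 / Real.sqrt 3

/-- Coordinate of `p` along the left boundary direction `(-1/2, √3/2)` of the upward cone. -/
def coordB (p : Pt) : ℝ := -p.1 + p.2 / Real.sqrt 3

end CHT6

/-
Let `ℓ` be the linear functional `p ↦ -c · crossP (v - u) p`, where `c = crossP (v - u) (w - u)`
is nonzero by non-collinearity. It is constant on the line `uv` and strictly smaller there
than at every point of `Q`, so the face of `conv (Q ∪ {u, v})` on which `ℓ` is maximal is the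
convex hull of the maximisers in `Q ∪ {u, v}`, namely the segment `uv`. Being an exposed face,
it is extreme, so its endpoints are extreme points of the hull; and a nonzero functional is an
open map, so no maximiser of it lies in the interior of the hull.
-/

theorem Convex.union_halfSpace_lt {E : Type*} [AddCommGroup E] [Module ℝ E] {F : Set E}
    {f : E →ₗ[ℝ] ℝ} {r : ℝ} (hF : Convex ℝ F) (hFr : ∀ p ∈ F, f p = r) :
    Convex ℝ (F ∪ {y | f y < r}) := by
  have hmix : ∀ p ∈ F, ∀ q, f q < r → ∀ a b : ℝ, 0 ≤ a → 0 ≤ b → a + b = 1 →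
      a • p + b • q ∈ F ∪ {y | f y < r} := by
    intro p hp q hq a b ha hb hab
    rcases hb.eq_or_lt with rfl | hb
    · left
      rwa [zero_smul, add_zero, show a = 1 by linarith, one_smul]
    · right
      simp only [mem_ofPred_eq, map_add, map_smul, smul_eq_mul, hFr p hp]
      rw [show a = 1 - b by linarith]
      nlinarith [mul_pos hb (sub_pos.2 hq)]
  rintro p (hp | hp) q (hq | hq) a b ha hb hab
  · exact Or.inl (hF hp hq ha hb hab)
  · exact hmix p hp q hq a b ha hb hab
  · rw [add_comm]
    exact hmix q hq p hp b a hb ha (by linarith)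
  · exact Or.inr (convex_halfSpace_lt f.isLinear r hp hq ha hb hab)

namespace ContinuousLinearMap

variable {E : Type*} [AddCommGroup E] [Module ℝ E] [TopologicalSpace E]

theorem toExposed_convexHull (l : StrongDual ℝ E) (A : Set E) :
    l.toExposed (convexHull ℝ A) = convexHull ℝ (l.toExposed A) := by
  have hle : ∀ a ∈ l.toExposed A, ∀ y ∈ convexHull ℝ A, l y ≤ l a := fun a ha =>
    convexHull_min ha.2 (convex_halfSpace_le l.isLinear (l a))
  refine Subset.antisymm ?_ <| convexHull_min
    (fun a ha => ⟨subset_convexHull ℝ A ha.1, hle a ha⟩)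
    (toExposed.isExposed.convex (convex_convexHull ℝ A))
  rintro x ⟨hx, hxmax⟩
  set F := convexHull ℝ (l.toExposed A)
  have hF : ∀ p ∈ F, l p = l x := convexHull_min
    (fun a ha => (hle a ha x hx).antisymm' (hxmax a (subset_convexHull ℝ A ha.1)))
    (convex_hyperplane l.isLinear (l x))
  -- `A`, hence its hull, lies in the convex set `F ∪ {l < l x}`, and `x` is not below itself.
  have hAT : A ⊆ F ∪ {y | l y < l x} := by
    intro a ha
    rcases (hxmax a (subset_convexHull ℝ A ha)).lt_or_eq with h | h
    · exact Or.inr h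
    · refine Or.inl (subset_convexHull ℝ _ ⟨ha, fun y hy => ?_⟩)
      rw [h]
      exact hxmax y (subset_convexHull ℝ A hy)
  have hT :=
    (convex_convexHull ℝ (l.toExposed A)).union_halfSpace_lt (f := (l : E →ₗ[ℝ] ℝ)) hF
  exact (convexHull_min hAT hT hx).resolve_right (lt_irrefl (l x))

theorem toExposed_union_of_lt {l : StrongDual ℝ E} {Q S : Set E} {c : ℝ} (hS : S.Nonempty)
    (hSc : ∀ s ∈ S, l s = c) (hQ : ∀ q ∈ Q, l q < c) : l.toExposed (Q ∪ S) = S := by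
  obtain ⟨s₀, hs₀⟩ := hS
  have hmax : ∀ y ∈ Q ∪ S, l y ≤ c := by
    rintro y (hy | hy)
    exacts [(hQ y hy).le, (hSc y hy).le]
  ext x
  constructor
  · rintro ⟨hx | hx, hxmax⟩
    · have := hxmax s₀ (Or.inr hs₀)
      rw [hSc s₀ hs₀] at this
      exact absurd (hQ x hx) this.not_gt
    · exact hx
  · intro hx
    exact ⟨Or.inr hx, fun y hy => (hSc x hx).symm ▸ hmax y hy⟩

theorem toExposed_convexHull_union_pair {l : StrongDual ℝ E} {Q : Set E} {u v : E}
    (hQ : ∀ q ∈ Q, l q < l u) (hv : l v = l u) :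
    l.toExposed (convexHull ℝ (Q ∪ {u, v})) = segment ℝ u v := by
  have hpair : ∀ s ∈ ({u, v} : Set E), l s = l u := by
    rintro s (rfl | rfl)
    exacts [rfl, hv]
  rw [toExposed_convexHull, toExposed_union_of_lt (insert_nonempty u {v}) hpair hQ,
    convexHull_pair]

theorem isExtreme_convexHull_union_pair {l : StrongDual ℝ E} {Q : Set E} {u v : E}
    (hQ : ∀ q ∈ Q, l q < l u) (hv : l v = l u) :
    IsExtreme ℝ (convexHull ℝ (Q ∪ {u, v})) (segment ℝ u v) :=
  toExposed_convexHull_union_pair hQ hv ▸ toExposed.isExposed.isExtreme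

theorem disjoint_toExposed_interior [ContinuousAdd E] [ContinuousSMul ℝ E] (l : StrongDual ℝ E)
    (hl : l ≠ 0) (A : Set E) : Disjoint (l.toExposed A) (interior A) := by
  rw [Set.disjoint_left]
  rintro x ⟨-, hxmax⟩ hx
  have hnhds : l '' interior A ∈ nhds (l x) :=
    (l.isOpenMap_of_ne_zero hl).image_mem_nhds (isOpen_interior.mem_nhds hx)
  have hIic : l '' interior A ⊆ Iic (l x) := by
    rintro _ ⟨y, hy, rfl⟩
    exact hxmax y (interior_subset hy)
  have := interior_mono hIic (mem_interior_iff_mem_nhds.2 hnhds)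
  rw [interior_Iic] at this
  exact lt_irrefl (l x) this

theorem segment_subset_frontier_convexHull_union_pair [ContinuousAdd E] [ContinuousSMul ℝ E]
    {l : StrongDual ℝ E} (hl : l ≠ 0) {Q : Set E} {u v : E} (hQ : ∀ q ∈ Q, l q < l u)
    (hv : l v = l u) : segment ℝ u v ⊆ frontier (convexHull ℝ (Q ∪ {u, v})) := by
  intro x hx
  rw [← toExposed_convexHull_union_pair hQ hv] at hx
  exact ⟨subset_closure hx.1, Set.disjoint_left.1 (l.disjoint_toExposed_interior hl _) hx⟩

end ContinuousLinearMap

section SegmentEndpoints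

variable {E : Type*} [AddCommGroup E] [Module ℝ E] [TopologicalSpace E] [SeparatingDual ℝ E]

theorem left_mem_extremePoints_segment (u v : E) : u ∈ (segment ℝ u v).extremePoints ℝ := by
  obtain rfl | huv := eq_or_ne u v
  · simp [segment_same, extremePoints_singleton]
  obtain ⟨l, hl⟩ := SeparatingDual.exists_separating_of_ne (R := ℝ) huv
  wlog hlt : l v < l u generalizing l
  · exact this (-l) (by simpa using hl) (by simpa using hl.lt_of_le (not_lt.1 hlt))
  have hface : l.toExposed (segment ℝ u v) = {u} := by
    rw [← convexHull_pair, l.toExposed_convexHull, pair_comm, ← singleton_union,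
      l.toExposed_union_of_lt (singleton_nonempty u)
        (fun s hs => congrArg l hs)
        (fun q hq => (mem_singleton_iff.1 hq).symm ▸ hlt), convexHull_singleton]
  rw [← isExtreme_singleton, ← hface]
  exact ContinuousLinearMap.toExposed.isExposed.isExtreme

theorem right_mem_extremePoints_segment (u v : E) : v ∈ (segment ℝ u v).extremePoints ℝ :=
  segment_symm ℝ v u ▸ left_mem_extremePoints_segment v u

end SegmentEndpoints

namespace CHT6

theorem collinear_of_crossP_eq_zero {u v w : Pt} (h : crossP (v - u) (w - u) = 0) :
    Collinear ℝ ({u, v, w} : Set Pt) := by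
  obtain rfl | huv := eq_or_ne u v
  · simpa using collinear_pair ℝ u w
  set a := v - u
  have ha : a.1 ^ 2 + a.2 ^ 2 ≠ 0 := by
    intro h0
    apply huv
    have h1 : a.1 = 0 := by nlinarith [sq_nonneg a.1, sq_nonneg a.2]
    have h2 : a.2 = 0 := by nlinarith [sq_nonneg a.1, sq_nonneg a.2]
    exact (sub_eq_zero.1 (Prod.ext h1 h2)).symm
  -- `w - u` is parallel to `a`, so it equals its orthogonal projection onto `a`.
  have hw : w = AffineMap.lineMap u v
      ((a.1 * (w - u).1 + a.2 * (w - u).2) / (a.1 ^ 2 + a.2 ^ 2)) := by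
    simp only [crossP] at h
    rw [AffineMap.lineMap_apply]
    ext <;> simp only [vsub_eq_sub, vadd_eq_add, Prod.fst_add, Prod.snd_add, Prod.smul_fst,
      Prod.smul_snd, smul_eq_mul] <;> field_simp <;>
      simp only [a, Prod.fst_sub, Prod.snd_sub] at h ⊢
    · linear_combination -(v.2 - u.2) * h
    · linear_combination (v.1 - u.1) * h
  have :=
    collinear_insert_of_mem_affineSpan_pair (hw ▸ AffineMap.lineMap_mem_affineSpan_pair _ u v)
  rwa [Set.insert_comm, Set.pair_comm] at this

def crossPL (a : Pt) : StrongDual ℝ Pt :=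
  a.1 • ContinuousLinearMap.snd ℝ ℝ ℝ - a.2 • ContinuousLinearMap.fst ℝ ℝ ℝ

theorem crossPL_apply (a p : Pt) : crossPL a p = crossP a p := by
  simp [crossPL, crossP]

theorem crossPL_sub (a p q : Pt) : crossPL a p - crossPL a q = crossP a (p - q) := by
  simp only [crossPL_apply, crossP, Prod.fst_sub, Prod.snd_sub]
  ring

theorem exists_strongDual_lt_of_sameSide {u v w : Pt}
    (hncol : ¬ Collinear ℝ ({u, v, w} : Set Pt)) {Q : Set Pt}
    (hside : ∀ q ∈ Q, 0 < crossP (v - u) (q - u) * crossP (v - u) (w - u)) :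
    ∃ ℓ : StrongDual ℝ Pt, ℓ ≠ 0 ∧ ℓ v = ℓ u ∧ ∀ q ∈ Q, ℓ q < ℓ u := by
  set c := crossP (v - u) (w - u)
  have hc : c ≠ 0 := fun h => hncol (collinear_of_crossP_eq_zero h)
  set ℓ : StrongDual ℝ Pt := -(c • crossPL (v - u))
  have hℓ : ∀ p, ℓ p - ℓ u = -(c * crossP (v - u) (p - u)) := fun p => by
    simp only [ℓ, neg_apply, smul_apply, smul_eq_mul, ← crossPL_sub]
    ring
  refine ⟨ℓ, fun h => ?_, sub_eq_zero.1 ?_, fun q hq => ?_⟩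
  · have hw := hℓ w
    rw [h, zero_apply, zero_apply, sub_self, zero_eq_neg] at hw
    exact hc (mul_self_eq_zero.1 hw)
  · rw [hℓ v]
    simp [crossP, mul_comm]
  · linarith [hℓ q, mul_comm c (crossP (v - u) (q - u)) ▸ hside q hq]

theorem stmt_1_general (u v w : Pt) (hncol : ¬ Collinear ℝ ({u, v, w} : Set Pt))
    (Q : Set Pt)
    (hQ : Q ⊆ interior (convexHull ℝ ({u, v, w} : Set Pt)))
    (hside : ∀ q ∈ Q, 0 < crossP (v - u) (q - u) * crossP (v - u) (w - u)) :
    u ∈ Set.extremePoints ℝ (convexHull ℝ (Q ∪ {u, v})) ∧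
    v ∈ Set.extremePoints ℝ (convexHull ℝ (Q ∪ {u, v})) ∧
    segment ℝ u v ⊆ frontier (convexHull ℝ (Q ∪ {u, v})) ∧
    convexHull ℝ (Q ∪ {u, v}) ⊆ convexHull ℝ ({u, v, w} : Set Pt) ∧
    ∀ q ∈ Q, q ∉ convexHull ℝ ({u, v, w} : Set Pt) \ convexHull ℝ (Q ∪ {u, v}) := by
  obtain ⟨ℓ, hℓ, hv, hQℓ⟩ := exists_strongDual_lt_of_sameSide hncol hside
  have hext := ℓ.isExtreme_convexHull_union_pair hQℓ hv
  refine ⟨hext.extremePoints_subset_extremePoints (left_mem_extremePoints_segment u v),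
    hext.extremePoints_subset_extremePoints (right_mem_extremePoints_segment u v),
    ContinuousLinearMap.segment_subset_frontier_convexHull_union_pair hℓ hQℓ hv, ?_,
    fun q hq hmem => hmem.2 (subset_convexHull ℝ _ (Or.inl hq))⟩
  refine convexHull_min (union_subset (hQ.trans interior_subset) ?_) (convex_convexHull ℝ _)
  exact (insert_subset_insert (singleton_subset_iff.2 (mem_insert v {w}))).trans
    (subset_convexHull ℝ _)

/-- If a finite set `Q` lies strictly inside triangle `uvw` (in particular on the same side
of line `uv` as `w`), then `uv` is an edge of the convex hull of `Q ∪ {u, v}`: `u` and `v`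
are extreme points, the segment `uv` lies on the boundary of that hull, the hull (whose
boundary minus `uv` is the convex chain) is contained in the triangle, and the region of the
triangle between the chain and the sides `uw`, `wv` contains no point of `Q`. -/
theorem stmt_1 (u v w : Pt) (hncol : ¬ Collinear ℝ ({u, v, w} : Set Pt))
    (Q : Set Pt) (hQfin : Q.Finite)
    (hQ : Q ⊆ interior (convexHull ℝ ({u, v, w} : Set Pt)))
    (hside : ∀ q ∈ Q, 0 < crossP (v - u) (q - u) * crossP (v - u) (w - u)) :
    u ∈ Set.extremePoints ℝ (convexHull ℝ (Q ∪ {u, v})) ∧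
    v ∈ Set.extremePoints ℝ (convexHull ℝ (Q ∪ {u, v})) ∧
    segment ℝ u v ⊆ frontier (convexHull ℝ (Q ∪ {u, v})) ∧
    convexHull ℝ (Q ∪ {u, v}) ⊆ convexHull ℝ ({u, v, w} : Set Pt) ∧
    ∀ q ∈ Q, q ∉ convexHull ℝ ({u, v, w} : Set Pt) \ convexHull ℝ (Q ∪ {u, v}) :=
  stmt_1_general u v w hncol Q hQ hside

end CHT6
end
end

section
/- Let u be a point and w a point in the cone C₀ of u (the cone of angular width π/3 around the upward vertical direction from u). Let T(u,w) be the equilateral triangle with apex u bounded by the two rays defining C₀ and the horizontal line through w, let m be the midpoint of the side of T(u,w) opposite u, and let α be the unsigned angle between segments uw and um. If the side length of T(u,w) is taken as 1, then the path length |ua| + |aw|, where a is the upper-left corner of T(u,w), equals (√3·cos α + sin α)·|uw| when w lies on the right half of the top side; in particular max(|ua|+|aw|, |ub|+|bw|) = (√3·cos α + sin α)·|uw| where a, b are the two top corners. -/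
open Real Set

noncomputable section

/-! With `h = w.2 - u.2` and `x = w.1 - u.1`, both sides of the identity equal `√3·h + x`: the
corner `a` gives `|ua| = 2h/√3` and `|aw| = h/√3 + x`, while `|uw|·cos α = h` and
`|uw|·sin α = x`. The other corner gives `√3·h - x`, which is no larger. -/

namespace Real

lemma mul_cos_arccos_div {y d : ℝ} (h : |y| ≤ d) : d * cos (arccos (y / d)) = y := by
  have hd : 0 ≤ d := (abs_nonneg y).trans h
  rcases hd.eq_or_lt with rfl | hd
  · simp [abs_nonpos_iff.mp h]
  have hle : |y / d| ≤ 1 := by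
    rw [abs_div, abs_of_pos hd]
    exact div_le_one_of_le₀ h hd.le
  rw [cos_arccos (abs_le.mp hle).1 (abs_le.mp hle).2]
  field_simp

lemma mul_sin_arccos_div {y d : ℝ} (h : |y| ≤ d) :
    d * sin (arccos (y / d)) = √(d ^ 2 - y ^ 2) := by
  have hd : 0 ≤ d := (abs_nonneg y).trans h
  rcases hd.eq_or_lt with rfl | hd
  · simp [abs_nonpos_iff.mp h]
  rw [sin_arccos, ← sqrt_sq hd.le, ← sqrt_mul (sq_nonneg d), sqrt_sq hd.le]
  congr 1
  field_simp

end Real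

namespace CHT6

lemma dst_comm (p q : Pt) : dst p q = dst q p := by
  rw [dst, dst]
  ring_nf

lemma dst_eq_of_sq_eq {p q : Pt} {c : ℝ} (hc : 0 ≤ c)
    (h : (p.1 - q.1) ^ 2 + (p.2 - q.2) ^ 2 = c ^ 2) : dst p q = c := by
  rw [dst, h, sqrt_sq hc]

lemma dst_mk_snd (x : ℝ) (q : Pt) : dst (x, q.2) q = |x - q.1| := by
  rw [dst, sub_self, zero_pow two_ne_zero, add_zero, sqrt_sq_eq_abs]

lemma sq_dst (p q : Pt) : dst p q ^ 2 = (p.1 - q.1) ^ 2 + (p.2 - q.2) ^ 2 :=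
  sq_sqrt (by positivity)

lemma abs_snd_sub_le_dst (p q : Pt) : |q.2 - p.2| ≤ dst p q := by
  rw [abs_sub_comm]
  exact abs_le_sqrt (by nlinarith [sq_nonneg (p.1 - q.1)])

lemma dst_eq_of_three_mul_sq_eq {u p : Pt} (hup : u.2 ≤ p.2)
    (hp : 3 * (p.1 - u.1) ^ 2 = (p.2 - u.2) ^ 2) :
    dst u p = 2 * (p.2 - u.2) / √3 := by
  have hs : √3 ^ 2 = 3 := sq_sqrt (by norm_num)
  refine dst_eq_of_sq_eq (by positivity) ?_
  field_simp
  nlinarith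

lemma ang_vertical_eq_arccos (u w : Pt) {t : ℝ} (ht : u.2 < t) :
    ang w u (u.1, t) = arccos ((w.2 - u.2) / dst u w) := by
  have hmu : dst (u.1, t) u = t - u.2 := dst_eq_of_sq_eq (by linarith) (by ring)
  rw [ang, hmu, dst_comm w u, ← mul_div_mul_right (w.2 - u.2) (dst u w) (sub_pos.mpr ht).ne']
  congr 2
  ring

lemma dst_mul_cos_ang_vertical (u w : Pt) {t : ℝ} (ht : u.2 < t) :
    dst u w * cos (ang w u (u.1, t)) = w.2 - u.2 := by
  rw [ang_vertical_eq_arccos u w ht, Real.mul_cos_arccos_div (abs_snd_sub_le_dst u w)]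

lemma dst_mul_sin_ang_vertical (u w : Pt) {t : ℝ} (ht : u.2 < t) :
    dst u w * sin (ang w u (u.1, t)) = |w.1 - u.1| := by
  rw [ang_vertical_eq_arccos u w ht, Real.mul_sin_arccos_div (abs_snd_sub_le_dst u w), sq_dst,
    ← sqrt_sq_eq_abs]
  congr 1
  ring

/-- For `w` in the upward cone `C₀` of `u`, with `a`, `b` the upper-left and upper-right
corners of the canonical triangle `T(u,w)`, `m` the midpoint of its top side, and
`α` the unsigned angle between `uw` and `um`: if `w` lies in the right half then
`|ua| + |aw| = (√3·cos α + sin α)·|uw|`, and in particular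
`max(|ua| + |aw|, |ub| + |bw|) = (√3·cos α + sin α)·|uw|`. -/
theorem stmt_6 (u w : Pt) (hcone : Real.sqrt 3 * |w.1 - u.1| < w.2 - u.2)
    (hright : u.1 ≤ w.1) (a b m : Pt)
    (ha : a = (u.1 - (w.2 - u.2) / Real.sqrt 3, w.2))
    (hb : b = (u.1 + (w.2 - u.2) / Real.sqrt 3, w.2))
    (hm : m = (u.1, w.2)) :
    dst u a + dst a w =
      (Real.sqrt 3 * Real.cos (ang w u m) + Real.sin (ang w u m)) * dst u w ∧
    max (dst u a + dst a w) (dst u b + dst b w) =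
      (Real.sqrt 3 * Real.cos (ang w u m) + Real.sin (ang w u m)) * dst u w := by
  have hs : √3 ^ 2 = 3 := sq_sqrt (by norm_num)
  have hx : |w.1 - u.1| = w.1 - u.1 := abs_of_nonneg (sub_nonneg.mpr hright)
  rw [hx] at hcone
  have hh : u.2 < w.2 := by nlinarith [sqrt_nonneg 3]
  have hxh : w.1 - u.1 ≤ (w.2 - u.2) / √3 := by
    rw [le_div_iff₀ (by positivity)]
    linarith
  have hua : dst u a = 2 * (w.2 - u.2) / √3 := by
    rw [ha]
    exact dst_eq_of_three_mul_sq_eq hh.le (by field_simp; linear_combination -(w.2 - u.2) ^ 2 * hs)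
  have hub : dst u b = 2 * (w.2 - u.2) / √3 := by
    rw [hb]
    exact dst_eq_of_three_mul_sq_eq hh.le (by field_simp; linear_combination -(w.2 - u.2) ^ 2 * hs)
  have haw : dst a w = (w.2 - u.2) / √3 + (w.1 - u.1) := by
    rw [ha, dst_mk_snd, abs_of_nonpos (by linarith)]
    ring
  have hbw : dst b w = (w.2 - u.2) / √3 - (w.1 - u.1) := by
    rw [hb, dst_mk_snd, abs_of_nonneg (by linarith)]
    ring
  have hleft : dst u a + dst a w = √3 * (w.2 - u.2) + (w.1 - u.1) := by
    rw [hua, haw]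
    field_simp
    linear_combination -(w.2 - u.2) * hs
  have hrhs : (√3 * cos (ang w u m) + sin (ang w u m)) * dst u w =
      √3 * (w.2 - u.2) + (w.1 - u.1) := by
    rw [hm]
    linear_combination √3 * dst_mul_cos_ang_vertical u w hh +
      dst_mul_sin_ang_vertical u w hh + hx
  have hle : dst u b + dst b w ≤ dst u a + dst a w := by
    rw [hua, hub, haw, hbw]
    linarith
  have key := hleft.trans hrhs.symm
  exact ⟨key, (max_eq_left hle).trans key⟩

end CHT6
end
end

section
/- Let T₁ and T₂ be two downward-pointing equilateral triangles in the plane (i.e., triangles with one horizontal top side and apex below, all with the same orientation: their corresponding sides pairwise parallel). If T₁ and T₂ intersect, then at least one corner of one triangle is contained in the other triangle. -/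
/-!
A downward triangle is the set where the three linear levels `2y`, `√3 x - y` and `-√3 x - y`,
which sum to zero, are bounded by their values on the top, right and left side; each corner
makes two of these bounds tight. Of the three comparisons between the side levels of `T₁` and
`T₂`, two go the same way, say with `T₁` below; the corner of `T₁` on those two sides then
satisfies the corresponding two bounds of `T₂`, and the third follows by comparing with a common
point, since the levels sum to zero.
-/

open Real Set

noncomputable section

namespace CHT6

/-- The downward-pointing equilateral triangle with bottom apex `c` and side length `s`:
horizontal top side at height `c.2 + s·√3/2`. -/
def dTri (c : Pt) (s : ℝ) : Set Pt :=
  convexHull ℝ {c, (c.1 - s / 2, c.2 + s * Real.sqrt 3 / 2),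
    (c.1 + s / 2, c.2 + s * Real.sqrt 3 / 2)}

/-- The three corners of that triangle. -/
def dCorners (c : Pt) (s : ℝ) : Set Pt :=
  {c, (c.1 - s / 2, c.2 + s * Real.sqrt 3 / 2), (c.1 + s / 2, c.2 + s * Real.sqrt 3 / 2)}

theorem smul_add_smul_add_smul_mem_convexHull {R E : Type*} [Field R] [LinearOrder R]
    [IsStrictOrderedRing R] [AddCommGroup E] [Module R E] {x y z : E} {a b c : R} (ha : 0 ≤ a)
    (hb : 0 ≤ b) (hc : 0 ≤ c) (habc : a + b + c = 1) :
    a • x + b • y + c • z ∈ convexHull R {x, y, z} := by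
  refine mem_convexHull_of_exists_fintype ![a, b, c] ![x, y, z] ?_ ?_ ?_ ?_
  · intro i; fin_cases i <;> assumption
  · simpa [Fin.sum_univ_three] using habc
  · intro i; fin_cases i <;> simp
  · simp [Fin.sum_univ_three]

def topLevel : Pt →ₗ[ℝ] ℝ := (2 : ℝ) • LinearMap.snd ℝ ℝ ℝ

def rightLevel : Pt →ₗ[ℝ] ℝ := √3 • LinearMap.fst ℝ ℝ ℝ - LinearMap.snd ℝ ℝ ℝ

def leftLevel : Pt →ₗ[ℝ] ℝ := -(√3 • LinearMap.fst ℝ ℝ ℝ) - LinearMap.snd ℝ ℝ ℝ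

theorem topLevel_apply (p : Pt) : topLevel p = 2 * p.2 := rfl

theorem rightLevel_apply (p : Pt) : rightLevel p = √3 * p.1 - p.2 := rfl

theorem leftLevel_apply (p : Pt) : leftLevel p = -(√3 * p.1) - p.2 := rfl

theorem topLevel_add_rightLevel_add_leftLevel (p : Pt) :
    topLevel p + rightLevel p + leftLevel p = 0 := by
  rw [topLevel_apply, rightLevel_apply, leftLevel_apply]; ring

def levelTri (t r l : ℝ) : Set Pt :=
  {p | topLevel p ≤ t ∧ rightLevel p ≤ r ∧ leftLevel p ≤ l}

theorem convex_levelTri (t r l : ℝ) : Convex ℝ (levelTri t r l) :=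
  (convex_halfSpace_le topLevel.isLinear t).inter
    ((convex_halfSpace_le rightLevel.isLinear r).inter (convex_halfSpace_le leftLevel.isLinear l))

section corners

variable {t r l t' r' l' : ℝ} {p q : Pt}

/-- The third level of the corner `q` is bounded through the common point `p`: the two levels
tight at `q` dominate those of `p`, and all levels sum to zero. -/
theorem mem_levelTri_of_right_left (hp : p ∈ levelTri t r l) (hp' : p ∈ levelTri t' r' l')
    (hqr : rightLevel q = r) (hql : leftLevel q = l) (hr : r ≤ r') (hl : l ≤ l') :
    q ∈ levelTri t' r' l' := by
  obtain ⟨-, hpr, hpl⟩ := hp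
  obtain ⟨hpt', -, -⟩ := hp'
  refine ⟨?_, hqr.le.trans hr, hql.le.trans hl⟩
  linarith [topLevel_add_rightLevel_add_leftLevel p, topLevel_add_rightLevel_add_leftLevel q]

theorem mem_levelTri_of_top_right (hp : p ∈ levelTri t r l) (hp' : p ∈ levelTri t' r' l')
    (hqt : topLevel q = t) (hqr : rightLevel q = r) (ht : t ≤ t') (hr : r ≤ r') :
    q ∈ levelTri t' r' l' := by
  obtain ⟨hpt, hpr, -⟩ := hp
  obtain ⟨-, -, hpl'⟩ := hp'
  refine ⟨hqt.le.trans ht, hqr.le.trans hr, ?_⟩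
  linarith [topLevel_add_rightLevel_add_leftLevel p, topLevel_add_rightLevel_add_leftLevel q]

theorem mem_levelTri_of_top_left (hp : p ∈ levelTri t r l) (hp' : p ∈ levelTri t' r' l')
    (hqt : topLevel q = t) (hql : leftLevel q = l) (ht : t ≤ t') (hl : l ≤ l') :
    q ∈ levelTri t' r' l' := by
  obtain ⟨hpt, -, hpl⟩ := hp
  obtain ⟨-, hpr', -⟩ := hp'
  refine ⟨hqt.le.trans ht, ?_, hql.le.trans hl⟩
  linarith [topLevel_add_rightLevel_add_leftLevel p, topLevel_add_rightLevel_add_leftLevel q]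

end corners

def topLeftCorner (c : Pt) (s : ℝ) : Pt := (c.1 - s / 2, c.2 + s * √3 / 2)

def topRightCorner (c : Pt) (s : ℝ) : Pt := (c.1 + s / 2, c.2 + s * √3 / 2)

section downTriangle

variable {c : Pt} {s : ℝ}

theorem dCorners_eq : dCorners c s = {c, topLeftCorner c s, topRightCorner c s} := rfl

theorem dTri_eq_convexHull : dTri c s = convexHull ℝ {c, topLeftCorner c s, topRightCorner c s} :=
  rfl

theorem topLevel_topLeftCorner : topLevel (topLeftCorner c s) = topLevel c + s * √3 := by
  simp only [topLevel_apply, topLeftCorner]; ring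

theorem rightLevel_topLeftCorner : rightLevel (topLeftCorner c s) = rightLevel c - s * √3 := by
  simp only [rightLevel_apply, topLeftCorner]; ring

theorem leftLevel_topLeftCorner : leftLevel (topLeftCorner c s) = leftLevel c := by
  simp only [leftLevel_apply, topLeftCorner]; ring

theorem topLevel_topRightCorner : topLevel (topRightCorner c s) = topLevel c + s * √3 := by
  simp only [topLevel_apply, topRightCorner]; ring

theorem rightLevel_topRightCorner : rightLevel (topRightCorner c s) = rightLevel c := by
  simp only [rightLevel_apply, topRightCorner]; ring

theorem leftLevel_topRightCorner : leftLevel (topRightCorner c s) = leftLevel c - s * √3 := by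
  simp only [leftLevel_apply, topRightCorner]; ring

theorem dTri_eq_levelTri (hs : 0 < s) :
    dTri c s = levelTri (topLevel c + s * √3) (rightLevel c) (leftLevel c) := by
  have hs3 : 0 < s * √3 := by positivity
  apply Subset.antisymm
  · refine convexHull_min ?_ (convex_levelTri _ _ _)
    rintro q (rfl | rfl | rfl)
    · exact ⟨le_add_of_nonneg_right hs3.le, le_rfl, le_rfl⟩
    · exact ⟨topLevel_topLeftCorner.le, rightLevel_topLeftCorner.trans_le (sub_le_self _ hs3.le),
        leftLevel_topLeftCorner.le⟩
    · exact ⟨topLevel_topRightCorner.le, rightLevel_topRightCorner.le,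
        leftLevel_topRightCorner.trans_le (sub_le_self _ hs3.le)⟩
  · rintro p ⟨ht, hr, hl⟩
    rw [dTri_eq_convexHull]
    -- barycentric coordinates: each weight is the level gap to the opposite side
    have key := smul_add_smul_add_smul_mem_convexHull (x := c) (y := topLeftCorner c s)
      (z := topRightCorner c s) (div_nonneg (sub_nonneg.2 ht) hs3.le)
      (div_nonneg (sub_nonneg.2 hr) hs3.le) (div_nonneg (sub_nonneg.2 hl) hs3.le) ?_
    · convert key using 1
      rw [topLevel_apply, topLevel_apply, rightLevel_apply, rightLevel_apply, leftLevel_apply,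
        leftLevel_apply]
      ext <;> simp only [topLeftCorner, topRightCorner, Prod.fst_add, Prod.snd_add,
        Prod.smul_fst, Prod.smul_snd, smul_eq_mul] <;> field_simp <;> ring
    · rw [← add_div, ← add_div, div_eq_one_iff_eq hs3.ne']
      linarith [topLevel_add_rightLevel_add_leftLevel p, topLevel_add_rightLevel_add_leftLevel c]

end downTriangle

theorem stmt_8_general (c₁ c₂ : Pt) (s₁ s₂ : ℝ) (hs₁ : 0 < s₁) (hs₂ : 0 < s₂)
    (hint : (dTri c₁ s₁ ∩ dTri c₂ s₂).Nonempty) :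
    (∃ p ∈ dCorners c₁ s₁, p ∈ dTri c₂ s₂) ∨ (∃ p ∈ dCorners c₂ s₂, p ∈ dTri c₁ s₁) := by
  obtain ⟨p, hp₁, hp₂⟩ := hint
  simp only [dCorners_eq, dTri_eq_levelTri hs₁, dTri_eq_levelTri hs₂] at hp₁ hp₂ ⊢
  rcases le_total (rightLevel c₁) (rightLevel c₂) with hr | hr <;>
    rcases le_total (leftLevel c₁) (leftLevel c₂) with hl | hl
  · exact Or.inl ⟨c₁, by simp, mem_levelTri_of_right_left hp₁ hp₂ rfl rfl hr hl⟩
  · rcases le_total (topLevel c₁ + s₁ * √3) (topLevel c₂ + s₂ * √3) with ht | ht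
    · exact Or.inl ⟨topRightCorner c₁ s₁, by simp, mem_levelTri_of_top_right hp₁ hp₂
        topLevel_topRightCorner rightLevel_topRightCorner ht hr⟩
    · exact Or.inr ⟨topLeftCorner c₂ s₂, by simp, mem_levelTri_of_top_left hp₂ hp₁
        topLevel_topLeftCorner leftLevel_topLeftCorner ht hl⟩
  · rcases le_total (topLevel c₁ + s₁ * √3) (topLevel c₂ + s₂ * √3) with ht | ht
    · exact Or.inl ⟨topLeftCorner c₁ s₁, by simp, mem_levelTri_of_top_left hp₁ hp₂
        topLevel_topLeftCorner leftLevel_topLeftCorner ht hl⟩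
    · exact Or.inr ⟨topRightCorner c₂ s₂, by simp, mem_levelTri_of_top_right hp₂ hp₁
        topLevel_topRightCorner rightLevel_topRightCorner ht hr⟩
  · exact Or.inr ⟨c₂, by simp, mem_levelTri_of_right_left hp₂ hp₁ rfl rfl hr hl⟩

/-- If two downward-pointing equilateral triangles with pairwise parallel corresponding
sides intersect (in general position: no top side at the height of a corner of the other),
then a corner of one triangle is contained in the other. -/
theorem stmt_8 (c₁ c₂ : Pt) (s₁ s₂ : ℝ) (hs₁ : 0 < s₁) (hs₂ : 0 < s₂)
    (hgp₁ : c₁.2 + s₁ * Real.sqrt 3 / 2 ≠ c₂.2 + s₂ * Real.sqrt 3 / 2)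
    (hgp₂ : c₁.2 + s₁ * Real.sqrt 3 / 2 ≠ c₂.2)
    (hgp₃ : c₂.2 + s₂ * Real.sqrt 3 / 2 ≠ c₁.2)
    (hint : (dTri c₁ s₁ ∩ dTri c₂ s₂).Nonempty) :
    (∃ p ∈ dCorners c₁ s₁, p ∈ dTri c₂ s₂) ∨ (∃ p ∈ dCorners c₂ s₂, p ∈ dTri c₁ s₁) :=
  stmt_8_general c₁ c₂ s₁ s₂ hs₁ hs₂ hint

end CHT6
end
end

section
/- Let u, v, w be three vertices such that v and w are consecutive vertices along a canonical path of u in the negative cone C̄ᵘᵢ. Then w does not lie in the positive cone Cᵛᵢ nor in the negative cone C̄ᵛᵢ of v. -/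
open Real Set

noncomputable section

/-!
Suppose `w ∈ Cᵢ(v)`, so that `u ∈ Cᵢ(v) ∩ Cᵢ(w)` and `u` is the vertex `v` chose in its
subcone of `Cᵢ(v)`. Among the vertices in the triangle `v u w` off the side `vu`, take the vertex
`x` whose ray from `v` is closest to `vu`; `x` is nearer to `v` than `u` in projection. A
constraint hiding `x` from `v`, or separating `x` from `u` at `v`, would have an endpoint in the
triangle whose ray is even closer to `vu`: it cannot leave the triangle through `vu` or `uw`,
because `v` and `w` see `u`, and it cannot end at `u`, because `v` and `w` lie in the same
subcone of `u`. Hence `v` sees `x` in the subcone of `u`, contradicting the choice of `u`.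
The case `w ∈ C̄ᵢ(v)`, that is `v ∈ Cᵢ(w)`, is the same with `v` and `w` exchanged.
-/

namespace CHT6

section Cones

def InUpCone (X : Pt) : Prop := √3 * |X.1| < X.2

lemma inUpCone_iff {X : Pt} : InUpCone X ↔ √3 * X.1 < X.2 ∧ -(√3 * X.1) < X.2 := by
  rw [InUpCone, ← abs_of_nonneg (Real.sqrt_nonneg 3), ← abs_mul, abs_lt,
    abs_of_nonneg (Real.sqrt_nonneg 3)]
  constructor <;> rintro ⟨h1, h2⟩ <;> constructor <;> linarith

lemma InUpCone.snd_pos {X : Pt} (h : InUpCone X) : 0 < X.2 :=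
  lt_of_le_of_lt (by positivity) h

lemma InUpCone.not_neg {X : Pt} (h : InUpCone X) : ¬ InUpCone (-X) := fun h' => by
  have := h'.snd_pos
  rw [Prod.snd_neg] at this
  linarith [h.snd_pos]

lemma InUpCone.smul_add_smul {X Y : Pt} {s t : ℝ} (hX : InUpCone X) (hY : InUpCone Y)
    (hs : 0 ≤ s) (ht : 0 < t) : InUpCone (s • X + t • Y) := by
  rw [inUpCone_iff] at *
  simp only [Prod.fst_add, Prod.snd_add, Prod.smul_fst, Prod.smul_snd, smul_eq_mul]
  constructor <;> nlinarith [mul_le_mul_of_nonneg_left hX.1.le hs,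
    mul_le_mul_of_nonneg_left hX.2.le hs, mul_lt_mul_of_pos_left hY.1 ht,
    mul_lt_mul_of_pos_left hY.2 ht]

lemma InUpCone.not_rot {X : Pt} {θ : ℝ} (h : InUpCone X) (hcos : cos θ = -(1 / 2))
    (hsin : sin θ = √3 / 2 ∨ sin θ = -(√3 / 2)) :
    ¬ InUpCone (rot θ X) ∧ ¬ InUpCone (-rot θ X) := by
  have h3 : √3 * √3 = 3 := Real.mul_self_sqrt (by norm_num)
  rw [inUpCone_iff, inUpCone_iff] at *
  simp only [rot, Prod.fst_neg, Prod.snd_neg, hcos]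
  rcases hsin with e | e <;> rw [e] <;> constructor <;> rintro ⟨h1, h2⟩ <;> nlinarith

lemma rot_add (θ : ℝ) (X Y : Pt) : rot θ (X + Y) = rot θ X + rot θ Y := by
  ext <;> simp only [rot, Prod.fst_add, Prod.snd_add] <;> ring

lemma rot_smul (θ t : ℝ) (X : Pt) : rot θ (t • X) = t • rot θ X := by
  ext <;> simp only [rot, Prod.smul_fst, Prod.smul_snd, smul_eq_mul] <;> ring

lemma rot_rot (α β : ℝ) (X : Pt) : rot α (rot β X) = rot (α + β) X := by
  ext <;> simp only [rot, cos_add, sin_add] <;> ring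

lemma rel_sub_rel (i : ℕ) (c p q : Pt) : rel i c p - rel i c q = rel i q p := by
  ext <;> simp only [rel, rot, Prod.fst_sub, Prod.snd_sub] <;> ring

lemma rel_swap (i : ℕ) (c p : Pt) : rel i p c = -rel i c p := by
  ext <;> simp only [rel, rot, Prod.fst_sub, Prod.snd_sub, Prod.fst_neg, Prod.snd_neg] <;> ring

lemma rel_eq_rot_rel (i j : ℕ) (c p : Pt) :
    rel i c p = rot (2 * π * (j - i) / 3) (rel j c p) := by
  rw [rel, rel, rot_rot]
  ring_nf

lemma cos_sin_of_angle {θ : ℝ}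
    (h : θ = 2 * π / 3 ∨ θ = -(2 * π / 3) ∨ θ = 4 * π / 3 ∨ θ = -(4 * π / 3)) :
    cos θ = -(1 / 2) ∧ (sin θ = √3 / 2 ∨ sin θ = -(√3 / 2)) := by
  have h₁ : cos (2 * π / 3) = -(1 / 2) ∧ sin (2 * π / 3) = √3 / 2 := by
    rw [show 2 * π / 3 = π - π / 3 by ring, cos_pi_sub, sin_pi_sub, cos_pi_div_three,
      sin_pi_div_three]
    norm_num
  have h₂ : cos (4 * π / 3) = -(1 / 2) ∧ sin (4 * π / 3) = -(√3 / 2) := by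
    rw [show 4 * π / 3 = π / 3 + π by ring, cos_add_pi, sin_add_pi, cos_pi_div_three,
      sin_pi_div_three]
    norm_num
  rcases h with rfl | rfl | rfl | rfl <;> simp only [cos_neg, sin_neg, h₁, h₂, neg_neg] <;>
    simp

lemma cos_sin_two_pi_mul_sub_div_three {i j : ℕ} (hi : i < 3) (hj : j < 3) (hij : i ≠ j) :
    cos (2 * π * (j - i) / 3) = -(1 / 2) ∧
      (sin (2 * π * (j - i) / 3) = √3 / 2 ∨ sin (2 * π * (j - i) / 3) = -(√3 / 2)) := by
  apply cos_sin_of_angle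
  interval_cases i <;> interval_cases j <;>
    first | exact absurd rfl hij | (push_cast; ring_nf; tauto)

lemma inPos_unique {i j : ℕ} {c p : Pt} (hi : i < 3) (hj : j < 3) (h₁ : inPos i c p)
    (h₂ : inPos j c p) : i = j := by
  by_contra hij
  obtain ⟨hcos, hsin⟩ := cos_sin_two_pi_mul_sub_div_three hi hj hij
  exact (InUpCone.not_rot h₂ hcos hsin).1 (rel_eq_rot_rel i j c p ▸ h₁)

lemma not_inPos_of_inNeg {i j : ℕ} {c p : Pt} (hi : i < 3) (hj : j < 3) (h₁ : inPos j c p)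
    (h₂ : inNeg i c p) : False := by
  have h₂' : InUpCone (-rel i c p) := rel_swap i c p ▸ h₂
  by_cases hij : i = j
  · subst hij
    exact InUpCone.not_neg h₁ h₂'
  · obtain ⟨hcos, hsin⟩ := cos_sin_two_pi_mul_sub_div_three hi hj hij
    exact (InUpCone.not_rot h₁ hcos hsin).2 (rel_eq_rot_rel i j c p ▸ h₂')

lemma ne_of_inPos {i : ℕ} {c p : Pt} (h : inPos i c p) : p ≠ c := by
  rintro rfl
  have : rel i p p = 0 := by ext <;> simp [rel, rot]
  exact lt_irrefl _ (InUpCone.snd_pos (this ▸ h : InUpCone 0))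

end Cones

section Visibility

lemma mem_openSegment_iff_exists {a b q : Pt} :
    q ∈ openSegment ℝ a b ↔ ∃ t : ℝ, 0 < t ∧ t < 1 ∧ a + t • (b - a) = q := by
  rw [openSegment_eq_image']
  constructor
  · rintro ⟨t, ⟨h0, h1⟩, rfl⟩
    exact ⟨t, h0, h1, rfl⟩
  · rintro ⟨t, h0, h1, rfl⟩
    exact ⟨t, ⟨h0, h1⟩, rfl⟩

lemma pCross_comm_left {a b c d : Pt} : PCross b a c d ↔ PCross a b c d := by
  rw [PCross, PCross, openSegment_symm ℝ b a]

lemma pCross_comm_right {a b c d : Pt} : PCross a b d c ↔ PCross a b c d := by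
  rw [PCross, PCross, openSegment_symm ℝ d c]

variable {S : Set (Pt × Pt)}

lemma Constr.mem_left {P : Set Pt} (hSP : ∀ e ∈ S, e.1 ∈ P ∧ e.2 ∈ P)
    {a b : Pt} (h : Constr S a b) : a ∈ P := by
  rcases h with h | h
  exacts [(hSP _ h).1, (hSP _ h).2]

lemma Constr.mem_right {P : Set Pt} (hSP : ∀ e ∈ S, e.1 ∈ P ∧ e.2 ∈ P)
    {a b : Pt} (h : Constr S a b) : b ∈ P :=
  Constr.mem_left hSP (Or.symm h)

lemma not_pCross_of_canSee (hSnc : ∀ e ∈ S, ∀ f ∈ S, e ≠ f → ¬ PCross e.1 e.2 f.1 f.2)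
    {a b p q : Pt} (hsee : CanSee S a b) (hpq : Constr S p q) (hpa : p ≠ a) (hpb : p ≠ b) :
    ¬ PCross p q a b := by
  intro hX
  have key : ∀ e ∈ S, (e = (p, q) ∨ e = (q, p)) → False := by
    intro e he hepq
    have hXe : PCross e.1 e.2 a b := by
      rcases hepq with rfl | rfl
      exacts [hX, pCross_comm_left.2 hX]
    have hne : ∀ f, (f = (a, b) ∨ f = (b, a)) → e ≠ f := by
      rintro f (rfl | rfl) rfl <;> rcases hepq with h | h <;> simp_all [Prod.ext_iff]
    rcases hsee with (hab | hba) | hall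
    · exact hSnc e he _ hab (hne _ (Or.inl rfl)) hXe
    · exact hSnc e he _ hba (hne _ (Or.inr rfl)) (pCross_comm_right.2 hXe)
    · exact hall e he hXe
  rcases hpq with h | h
  exacts [key _ h (Or.inl rfl), key _ h (Or.inr rfl)]

end Visibility

section GeneralPosition

@[simp] lemma crossP_self (X : Pt) : crossP X X = 0 := by simp [crossP, mul_comm]

lemma collinear_of_crossP_eq_zero_s12 {p q r : Pt} (h : crossP (q - p) (r - p) = 0) :
    Collinear ℝ ({p, q, r} : Set Pt) := by
  rcases eq_or_ne q p with rfl | hqp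
  · simpa using collinear_pair ℝ q r
  set X := q - p
  have hX : X.1 ^ 2 + X.2 ^ 2 ≠ 0 := by
    intro h0
    apply hqp
    rw [← sub_eq_zero]
    ext <;> simp only [Prod.fst_zero, Prod.snd_zero] <;> nlinarith [sq_nonneg X.1, sq_nonneg X.2]
  -- `r - p` is the multiple of `X` given by the projection coefficient
  have hr : r = AffineMap.lineMap p q
      ((X.1 * (r - p).1 + X.2 * (r - p).2) / (X.1 ^ 2 + X.2 ^ 2)) := by
    rw [AffineMap.lineMap_apply_module', ← sub_eq_iff_eq_add]
    unfold crossP at h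
    ext <;> simp only [Prod.smul_fst, Prod.smul_snd, smul_eq_mul] <;>
      rw [div_mul_eq_mul_div, eq_div_iff hX]
    · linear_combination -X.2 * h
    · linear_combination X.1 * h
  have := collinear_insert_of_mem_affineSpan_pair (k := ℝ)
    (hr ▸ AffineMap.lineMap_mem_affineSpan_pair _ p q)
  rwa [Set.insert_comm, Set.pair_comm] at this

variable {P : Set Pt}

lemma GenPos.eq_or_eq_of_crossP_eq_zero (hGP : GenPos P) {p q r : Pt} (hp : p ∈ P) (hq : q ∈ P)
    (hr : r ∈ P) (hpq : p ≠ q) (h : crossP (q - p) (r - p) = 0) : r = p ∨ r = q := by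
  by_contra! hne
  exact hGP.2 p hp q hq r hr hpq (Ne.symm hne.2) (Ne.symm hne.1) (collinear_of_crossP_eq_zero_s12 h)

lemma GenPos.eq_of_mem_openSegment (hGP : GenPos P) {a b m : Pt} (ha : a ∈ P) (hb : b ∈ P)
    (hm : m ∈ P) (h : m ∈ openSegment ℝ a b) : a = b := by
  by_contra hab
  have hma : m ≠ a := fun e => hab (left_mem_openSegment_iff.mp (e ▸ h))
  have hmb : m ≠ b := fun e => hab (right_mem_openSegment_iff.mp (e ▸ h))
  exact hGP.2 a ha m hm b hb hma.symm hmb hab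
    (mem_segment_iff_wbtw.mp (openSegment_subset_segment ℝ a b h)).collinear

lemma GenPos.crossP_mul_crossP_neg_of_pCross (hGP : GenPos P) {a b c x : Pt}
    (ha : a ∈ P) (hb : b ∈ P) (hc : c ∈ P) (hx : x ∈ P) (hcx : c ≠ x) (hX : PCross a b c x)
    (hne : ¬ ((a = c ∧ b = x) ∨ (a = x ∧ b = c))) :
    crossP (x - c) (a - c) * crossP (x - c) (b - c) < 0 := by
  obtain ⟨q, hqab, hqcx⟩ := hX
  obtain ⟨s, hs0, hs1, rfl⟩ := mem_openSegment_iff_exists.1 hqab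
  obtain ⟨t, -, -, hq⟩ := mem_openSegment_iff_exists.1 hqcx
  have hcomb : (1 - s) * crossP (x - c) (a - c) + s * crossP (x - c) (b - c) = 0 := by
    have h0 : crossP (x - c) (a + s • (b - a) - c) = 0 := by
      rw [← hq, add_sub_cancel_left]
      simp only [crossP, Prod.smul_fst, Prod.smul_snd, smul_eq_mul]
      ring
    rw [← h0]
    simp only [crossP, Prod.fst_add, Prod.snd_add, Prod.fst_sub, Prod.snd_sub, Prod.smul_fst,
      Prod.smul_snd, smul_eq_mul]
    ring
  have ha' : crossP (x - c) (a - c) ≠ 0 := by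
    intro ha0
    have hb0 : crossP (x - c) (b - c) = 0 := by
      rw [ha0, mul_zero, zero_add] at hcomb
      exact (mul_eq_zero.1 hcomb).resolve_left hs0.ne'
    rcases hGP.eq_or_eq_of_crossP_eq_zero hc hx ha hcx ha0 with rfl | rfl <;>
      rcases hGP.eq_or_eq_of_crossP_eq_zero hc hx hb hcx hb0 with rfl | rfl
    · simp [left_mem_openSegment_iff, hcx] at hqcx
    · exact hne (Or.inl ⟨rfl, rfl⟩)
    · exact hne (Or.inr ⟨rfl, rfl⟩)
    · simp [right_mem_openSegment_iff, hcx] at hqcx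
  have e : s * (crossP (x - c) (a - c) * crossP (x - c) (b - c)) =
      -((1 - s) * crossP (x - c) (a - c) ^ 2) := by
    linear_combination crossP (x - c) (a - c) * hcomb
  have hneg : s * (crossP (x - c) (a - c) * crossP (x - c) (b - c)) < 0 := by
    rw [e]
    exact neg_neg_of_pos (mul_pos (by linarith) (by positivity))
  exact neg_of_mul_neg_right hneg hs0.le

end GeneralPosition

section Barycentric

variable (c u d : Pt)

/-- `baryU c u d p` and `baryD c u d p` are the coordinates of `p - c` in the basis
`u - c, d - c` (Cramer's rule). -/
def baryU (p : Pt) : ℝ := crossP (p - c) (d - c) / crossP (u - c) (d - c)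

def baryD (p : Pt) : ℝ := crossP (u - c) (p - c) / crossP (u - c) (d - c)

/-- The closed triangle `c u d` without its side `cu`. -/
def InTriangle (p : Pt) : Prop :=
  0 ≤ baryU c u d p ∧ 0 < baryD c u d p ∧ baryU c u d p + baryD c u d p ≤ 1

/-- The ray from `c` through `p` meets the line `ud` at `u + rayParam c u d p • (d - u)`. -/
def rayParam (p : Pt) : ℝ := baryD c u d p / (baryU c u d p + baryD c u d p)

variable {c u d}

lemma sub_eq_bary (hK : crossP (u - c) (d - c) ≠ 0) (p : Pt) :
    p - c = baryU c u d p • (u - c) + baryD c u d p • (d - c) := by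
  ext <;> simp only [baryU, baryD, Prod.fst_add, Prod.snd_add, Prod.smul_fst, Prod.smul_snd,
      smul_eq_mul] <;>
    rw [div_mul_eq_mul_div, div_mul_eq_mul_div, ← add_div, eq_div_iff hK] <;>
    simp only [crossP, Prod.fst_sub, Prod.snd_sub] <;> ring

lemma crossP_eq_bary (hK : crossP (u - c) (d - c) ≠ 0) (p q r s : Pt) :
    crossP (p - q) (r - s) =
      ((baryU c u d p - baryU c u d q) * (baryD c u d r - baryD c u d s) -
        (baryD c u d p - baryD c u d q) * (baryU c u d r - baryU c u d s)) *
        crossP (u - c) (d - c) := by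
  have e : ∀ x y : Pt, x - y = (x - c) - (y - c) := fun x y => by abel
  rw [e p q, e r s, sub_eq_bary hK p, sub_eq_bary hK q, sub_eq_bary hK r, sub_eq_bary hK s]
  simp only [crossP, Prod.fst_add, Prod.snd_add, Prod.fst_sub, Prod.snd_sub, Prod.smul_fst,
    Prod.smul_snd, smul_eq_mul]
  ring

lemma baryU_lineMap (a b : Pt) (t : ℝ) :
    baryU c u d (a + t • (b - a)) = (1 - t) * baryU c u d a + t * baryU c u d b := by
  simp only [baryU, mul_div_assoc', ← add_div]
  congr 1
  simp only [crossP, Prod.fst_add, Prod.snd_add, Prod.fst_sub, Prod.snd_sub, Prod.smul_fst,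
    Prod.smul_snd, smul_eq_mul]
  ring

lemma baryD_lineMap (a b : Pt) (t : ℝ) :
    baryD c u d (a + t • (b - a)) = (1 - t) * baryD c u d a + t * baryD c u d b := by
  simp only [baryD, mul_div_assoc', ← add_div]
  congr 1
  simp only [crossP, Prod.fst_add, Prod.snd_add, Prod.fst_sub, Prod.snd_sub, Prod.smul_fst,
    Prod.smul_snd, smul_eq_mul]
  ring

@[simp] lemma baryU_c : baryU c u d c = 0 := by simp [baryU, crossP]

@[simp] lemma baryD_c : baryD c u d c = 0 := by simp [baryD, crossP]

@[simp] lemma baryD_u : baryD c u d u = 0 := by simp [baryD]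

@[simp] lemma baryU_d : baryU c u d d = 0 := by simp [baryU]

lemma baryU_u (hK : crossP (u - c) (d - c) ≠ 0) : baryU c u d u = 1 := div_self hK

lemma baryD_d (hK : crossP (u - c) (d - c) ≠ 0) : baryD c u d d = 1 := div_self hK

lemma crossP_eq_bary_apex (hK : crossP (u - c) (d - c) ≠ 0) (p q : Pt) :
    crossP (p - c) (q - c) =
      (baryU c u d p * baryD c u d q - baryD c u d p * baryU c u d q) *
        crossP (u - c) (d - c) := by
  rw [crossP_eq_bary hK p c q c]
  simp

lemma rayParam_lt {x y : Pt} (hx : InTriangle c u d x) (hy : InTriangle c u d y)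
    (h : baryU c u d x * baryD c u d y < baryD c u d x * baryU c u d y) :
    rayParam c u d y < rayParam c u d x := by
  obtain ⟨hxU, hxD, -⟩ := hx
  obtain ⟨hyU, hyD, -⟩ := hy
  rw [rayParam, rayParam, div_lt_div_iff₀ (by linarith) (by linarith)]
  linarith

lemma eq_add_smul_of_baryD_eq_zero (hK : crossP (u - c) (d - c) ≠ 0) {p : Pt}
    (h : baryD c u d p = 0) : p = c + baryU c u d p • (u - c) := by
  rw [← sub_eq_iff_eq_add', sub_eq_bary hK p, h, zero_smul, add_zero]

lemma eq_add_smul_of_bary_add_eq_one (hK : crossP (u - c) (d - c) ≠ 0) {p : Pt}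
    (h : baryU c u d p + baryD c u d p = 1) : p = u + baryD c u d p • (d - u) := by
  have e := sub_eq_bary hK p
  rw [eq_sub_of_add_eq h] at e
  rw [← sub_eq_iff_eq_add', show p - u = (p - c) - (u - c) by abel, e]
  ext <;> simp only [Prod.fst_add, Prod.snd_add, Prod.fst_sub, Prod.snd_sub, Prod.smul_fst,
    Prod.smul_snd, smul_eq_mul] <;> ring

end Barycentric

section ConeBarycentric

variable {i : ℕ} {c u d : Pt}

lemma rel_eq_bary (hK : crossP (u - c) (d - c) ≠ 0) (p : Pt) :
    rel i c p = baryU c u d p • rel i c u + baryD c u d p • rel i c d := by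
  rw [rel, sub_eq_bary hK p, rot_add, rot_smul, rot_smul]
  rfl

lemma inPos_of_bary (hcu : inPos i c u) (hcd : inPos i c d) (hK : crossP (u - c) (d - c) ≠ 0)
    {p : Pt} (hU : 0 ≤ baryU c u d p) (hD : 0 < baryD c u d p) : inPos i c p :=
  show InUpCone (rel i c p) by
    rw [rel_eq_bary hK]
    exact InUpCone.smul_add_smul hcu hcd hU hD

lemma not_inPos_of_bary_neg (hcu : inPos i c u) (hcd : inPos i c d)
    (hK : crossP (u - c) (d - c) ≠ 0) {p : Pt} (hU : baryU c u d p < 0)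
    (hD : baryD c u d p < 0) : ¬ inPos i c p := by
  have hneg : InUpCone (-rel i c p) := by
    rw [rel_eq_bary hK, neg_add, ← neg_smul, ← neg_smul]
    exact InUpCone.smul_add_smul hcu hcd (by linarith) (by linarith)
  exact fun h => InUpCone.not_neg h hneg

lemma inPos_of_bary_of_apex (hcu : inPos i c u) (hdu : inPos i d u)
    (hK : crossP (u - c) (d - c) ≠ 0) {p : Pt} (hD : 0 < baryD c u d p)
    (hs : baryU c u d p + baryD c u d p < 1) : inPos i p u := by
  show InUpCone (rel i p u)
  have e : rel i p u = (1 - baryU c u d p - baryD c u d p) • rel i c u +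
      baryD c u d p • rel i d u := by
    rw [← rel_sub_rel i c u p, ← rel_sub_rel i c u d, rel_eq_bary hK p]
    ext <;> simp only [Prod.fst_add, Prod.snd_add, Prod.fst_sub, Prod.snd_sub, Prod.smul_fst,
      Prod.smul_snd, smul_eq_mul] <;> ring
  rw [e]
  exact InUpCone.smul_add_smul hcu hdu (by linarith) hD

lemma projLen_lt_of_inTriangle (hcd : inPos i c d) (hdu : inPos i d u)
    (hK : crossP (u - c) (d - c) ≠ 0) {p : Pt} (hp : InTriangle c u d p) :
    projLen i c p < projLen i c u := by
  obtain ⟨hU, hD, hs⟩ := hp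
  have hsplit : projLen i c u = projLen i c d + projLen i d u := by
    rw [projLen, projLen, projLen, ← rel_sub_rel i c u d, Prod.snd_sub]
    ring
  have hd : 0 < projLen i c d := InUpCone.snd_pos hcd
  have hdu' : 0 < projLen i d u := InUpCone.snd_pos hdu
  have e : projLen i c p = baryU c u d p * projLen i c u + baryD c u d p * projLen i c d := by
    simp only [projLen, rel_eq_bary hK p, Prod.snd_add, Prod.smul_snd, smul_eq_mul]
  rw [e]
  nlinarith

lemma crossP_mul_crossP_neg_of_bary (hK : crossP (u - c) (d - c) ≠ 0) {p : Pt}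
    (hD : 0 < baryD c u d p) (hs : baryU c u d p + baryD c u d p < 1) :
    crossP (p - u) (c - u) * crossP (p - u) (d - u) < 0 := by
  rw [crossP_eq_bary hK p u c u, crossP_eq_bary hK p u d u]
  simp only [baryU_c, baryD_c, baryD_u, baryU_d, baryU_u hK, baryD_d hK]
  have hK2 : 0 < crossP (u - c) (d - c) ^ 2 := by positivity
  nlinarith [mul_pos hD hK2]

end ConeBarycentric

lemma exists_zero_of_neg_of_pos {α β : ℝ} (hα : α < 0) (hβ : 0 < β) :
    ∃ l, 0 < l ∧ l < 1 ∧ (1 - l) * α + l * β = 0 ∧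
      ∀ l', l ≤ l' → 0 ≤ (1 - l') * α + l' * β := by
  have hden : 0 < β - α := by linarith
  refine ⟨-α / (β - α), div_pos (by linarith) hden, (div_lt_one hden).2 (by linarith), ?_,
    fun l' hl' => ?_⟩
  · field_simp
    ring
  · rw [div_le_iff₀ hden] at hl'
    nlinarith

lemma exists_first_zero {α₁ β₁ α₂ β₂ : ℝ} (h₁ : 0 < β₁) (h₂ : 0 < β₂) (h : α₁ < 0 ∨ α₂ < 0) :
    ∃ l, 0 < l ∧ l < 1 ∧ 0 ≤ (1 - l) * α₁ + l * β₁ ∧ 0 ≤ (1 - l) * α₂ + l * β₂ ∧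
      ((1 - l) * α₁ + l * β₁ = 0 ∨ (1 - l) * α₂ + l * β₂ = 0) := by
  have hnonneg : ∀ {α β l : ℝ}, 0 ≤ α → 0 < β → 0 < l → l < 1 → 0 ≤ (1 - l) * α + l * β :=
    fun hα hβ hl hl' => by nlinarith
  rcases lt_or_ge α₁ 0 with ha₁ | ha₁ <;> rcases lt_or_ge α₂ 0 with ha₂ | ha₂
  · obtain ⟨l₁, hl₁, hl₁', hz₁, hm₁⟩ := exists_zero_of_neg_of_pos ha₁ h₁
    obtain ⟨l₂, hl₂, hl₂', hz₂, hm₂⟩ := exists_zero_of_neg_of_pos ha₂ h₂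
    rcases le_total l₁ l₂ with hl | hl
    · exact ⟨l₂, hl₂, hl₂', hm₁ l₂ hl, hz₂.ge, Or.inr hz₂⟩
    · exact ⟨l₁, hl₁, hl₁', hz₁.ge, hm₂ l₁ hl, Or.inl hz₁⟩
  · obtain ⟨l, hl, hl', hz, -⟩ := exists_zero_of_neg_of_pos ha₁ h₁
    exact ⟨l, hl, hl', hz.ge, hnonneg ha₂ h₂ hl hl', Or.inl hz⟩
  · obtain ⟨l, hl, hl', hz, -⟩ := exists_zero_of_neg_of_pos ha₂ h₂
    exact ⟨l, hl, hl', hnonneg ha₁ h₁ hl hl', hz.ge, Or.inr hz⟩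
  · exact absurd h (not_or.2 ⟨not_lt.2 ha₁, not_lt.2 ha₂⟩)

section EmptyTriangle

variable {P : Set Pt} {S : Set (Pt × Pt)} {i : ℕ} {c u d x : Pt}

lemma exists_rayParam_lt_of_not_sameSubPos (hSP : ∀ e ∈ S, e.1 ∈ P ∧ e.2 ∈ P)
    (hSnc : ∀ e ∈ S, ∀ f ∈ S, e ≠ f → ¬ PCross e.1 e.2 f.1 f.2)
    (hcu : inPos i c u) (hcd : inPos i c d) (hK : crossP (u - c) (d - c) ≠ 0)
    (hDu : CanSee S d u) (hx : InTriangle c u d x) (h : ¬ SameSubPos S i c u x) :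
    ∃ z ∈ P, InTriangle c u d z ∧ rayParam c u d z < rayParam c u d x := by
  simp only [SameSubPos, SameSubIn, not_forall, not_not] at h
  obtain ⟨z, hcz, hz, hsep⟩ := h
  have hxU := hx.1
  have hxD := hx.2.1
  rw [crossP_eq_bary_apex hK z u, crossP_eq_bary_apex hK z x, baryU_u hK, baryD_u] at hsep
  have hK2 : 0 < crossP (u - c) (d - c) ^ 2 := by positivity
  have hsep' : 0 < baryD c u d z *
      (baryU c u d z * baryD c u d x - baryD c u d z * baryU c u d x) := by
    nlinarith
  have hzD : 0 < baryD c u d z := by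
    by_contra! hle
    have hzD' : baryD c u d z < 0 := lt_of_le_of_ne hle (by rintro h0; simp [h0] at hsep')
    have hY : baryU c u d z * baryD c u d x - baryD c u d z * baryU c u d x < 0 := by nlinarith
    have hzU : baryU c u d z < 0 :=
      neg_of_mul_neg_left (by nlinarith [mul_nonpos_of_nonpos_of_nonneg hle hxU]) hxD.le
    exact not_inPos_of_bary_neg hcu hcd hK hzU hzD' hz
  have hclose : baryU c u d x * baryD c u d z < baryD c u d x * baryU c u d z := by
    linarith [(pos_iff_pos_of_mul_pos hsep').1 hzD]
  have hzU : 0 < baryU c u d z := by nlinarith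
  have hzs : baryU c u d z + baryD c u d z ≤ 1 := by
    by_contra! hgt
    -- otherwise the constraint `cz` crosses the segment `ud`
    set τ := (baryU c u d z + baryD c u d z)⁻¹
    have hτ0 : 0 < τ := inv_pos.2 (by linarith)
    have hmU : baryU c u d (c + τ • (z - c)) = τ * baryU c u d z := by simp [baryU_lineMap]
    have hmD : baryD c u d (c + τ • (z - c)) = τ * baryD c u d z := by simp [baryD_lineMap]
    have hsum : baryU c u d (c + τ • (z - c)) + baryD c u d (c + τ • (z - c)) = 1 := by
      rw [hmU, hmD, ← mul_add, inv_mul_cancel₀ (by linarith)]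
    apply not_pCross_of_canSee hSnc hDu hcz (ne_of_inPos hcd).symm (ne_of_inPos hcu).symm
    refine ⟨c + τ • (z - c), mem_openSegment_iff_exists.2
      ⟨τ, hτ0, inv_lt_one_of_one_lt₀ hgt, rfl⟩, ?_⟩
    rw [openSegment_symm, eq_add_smul_of_bary_add_eq_one hK hsum, hmD]
    exact mem_openSegment_iff_exists.2
      ⟨_, mul_pos hτ0 hzD, by nlinarith [mul_pos hτ0 hzU], rfl⟩
  exact ⟨z, hcz.mem_right hSP, ⟨hzU.le, hzD, hzs⟩, rayParam_lt hx ⟨hzU.le, hzD, hzs⟩ hclose⟩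

lemma false_of_crossing_from_apex (hSS : SameSubNeg S i u c d) (hcu : inPos i c u)
    (hdu : inPos i d u) (hK : crossP (u - c) (d - c) ≠ 0) (hx : InTriangle c u d x) {b : Pt}
    (hub : Constr S u b) {s t : ℝ} (hs0 : 0 < s) (ht0 : 0 < t) (ht1 : t < 1)
    (hq : u + s • (b - u) = c + t • (x - c)) : False := by
  obtain ⟨hxU, hxD, hxs⟩ := hx
  have hU := congrArg (baryU c u d) hq
  have hD := congrArg (baryD c u d) hq
  rw [baryU_lineMap, baryU_lineMap, baryU_u hK, baryU_c] at hU
  rw [baryD_lineMap, baryD_lineMap, baryD_u, baryD_c] at hD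
  have hbD : 0 < baryD c u d b :=
    (pos_iff_pos_of_mul_pos (by nlinarith : 0 < s * baryD c u d b)).1 hs0
  have hbs : baryU c u d b + baryD c u d b < 1 := by nlinarith
  exact hSS b hub (inPos_of_bary_of_apex hcu hdu hK hbD hbs)
    (crossP_mul_crossP_neg_of_bary hK hbD hbs)

lemma false_of_mem_openSegment_of_boundary (hGP : GenPos P)
    (hSnc : ∀ e ∈ S, ∀ f ∈ S, e ≠ f → ¬ PCross e.1 e.2 f.1 f.2)
    (hK : crossP (u - c) (d - c) ≠ 0) (hCu : CanSee S c u) (hDu : CanSee S d u) (hu : u ∈ P)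
    {a b m : Pt} (hab : Constr S a b) (ha : a ∈ P) (hb : b ∈ P) (hac : a ≠ c) (hau : a ≠ u)
    (had : a ≠ d) (hm : m ∈ openSegment ℝ a b) (hmU : 0 < baryU c u d m)
    (hmD : 0 ≤ baryD c u d m) (hms : baryU c u d m + baryD c u d m ≤ 1)
    (hedge : baryD c u d m = 0 ∨ baryU c u d m + baryD c u d m = 1) : False := by
  have hmu : m ≠ u := by
    rintro rfl
    obtain rfl := hGP.eq_of_mem_openSegment ha hb hu hm
    rw [openSegment_same, Set.mem_singleton_iff] at hm
    exact hau hm.symm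
  rcases hmD.eq_or_lt with h0 | hpos
  · have e := eq_add_smul_of_baryD_eq_zero hK h0.symm
    have hlt : baryU c u d m < 1 := lt_of_le_of_ne (by linarith) fun h1 =>
      hmu (by rw [e, h1, one_smul, add_sub_cancel])
    refine not_pCross_of_canSee hSnc hCu hab hac hau ⟨m, hm, ?_⟩
    rw [e]
    exact mem_openSegment_iff_exists.2 ⟨_, hmU, hlt, rfl⟩
  · have e := eq_add_smul_of_bary_add_eq_one hK (hedge.resolve_left hpos.ne')
    refine not_pCross_of_canSee hSnc hDu hab had hau ⟨m, hm, ?_⟩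
    rw [openSegment_symm, e]
    exact mem_openSegment_iff_exists.2 ⟨_, hpos, by linarith, rfl⟩

lemma bary_neg_of_not_inTriangle (hGP : GenPos P) (hK : crossP (u - c) (d - c) ≠ 0)
    (huc : u ≠ c) (hc : c ∈ P) (hu : u ∈ P) (hx : InTriangle c u d x) {a : Pt} (ha : a ∈ P)
    (hac : a ≠ c) (hau : a ≠ u) (haT : ¬ InTriangle c u d a)
    (hside : baryU c u d x * baryD c u d a < baryD c u d x * baryU c u d a) :
    baryD c u d a < 0 ∨ 1 - baryU c u d a - baryD c u d a < 0 := by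
  have haD : baryD c u d a ≠ 0 := by
    intro h0
    have hcol : crossP (u - c) (a - c) = 0 := by
      rw [crossP_eq_bary_apex hK, h0, baryU_u hK, baryD_u]
      ring
    exact (hGP.eq_or_eq_of_crossP_eq_zero hc hu ha huc.symm hcol).elim hac hau
  by_contra! h
  have haD' : 0 < baryD c u d a := lt_of_le_of_ne h.1 (Ne.symm haD)
  exact haT ⟨by nlinarith [hx.1, hx.2.1], haD', by linarith⟩

lemma false_of_crossing_of_bary_neg (hGP : GenPos P)
    (hSnc : ∀ e ∈ S, ∀ f ∈ S, e ≠ f → ¬ PCross e.1 e.2 f.1 f.2)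
    (hK : crossP (u - c) (d - c) ≠ 0) (hCu : CanSee S c u) (hDu : CanSee S d u) (hu : u ∈ P)
    (hx : InTriangle c u d x) {a b : Pt} (hab : Constr S a b) (ha : a ∈ P) (hb : b ∈ P)
    (hac : a ≠ c) (hau : a ≠ u) (had : a ≠ d) {s t : ℝ} (hs0 : 0 < s) (hs1 : s < 1)
    (ht0 : 0 < t) (ht1 : t < 1) (hq : a + s • (b - a) = c + t • (x - c))
    (hside : baryU c u d x * baryD c u d a < baryD c u d x * baryU c u d a)
    (hout : baryD c u d a < 0 ∨ 1 - baryU c u d a - baryD c u d a < 0) : False := by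
  obtain ⟨hxU, hxD, hxs⟩ := hx
  have hqU : baryU c u d (a + s • (b - a)) = t * baryU c u d x := by
    rw [hq, baryU_lineMap]
    simp
  have hqD : baryD c u d (a + s • (b - a)) = t * baryD c u d x := by
    rw [hq, baryD_lineMap]
    simp
  -- the point `m` where the segment from `a` to the crossing point enters the triangle
  obtain ⟨l, hl0, hl1, hmD, hms, hedge⟩ := exists_first_zero (mul_pos ht0 hxD)
    (by nlinarith : 0 < 1 - t * baryU c u d x - t * baryD c u d x) hout
  set m := a + l • (a + s • (b - a) - a) with hm_def
  have hmU : baryU c u d m = (1 - l) * baryU c u d a + l * (t * baryU c u d x) := by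
    rw [baryU_lineMap, hqU]
  have hmD' : baryD c u d m = (1 - l) * baryD c u d a + l * (t * baryD c u d x) := by
    rw [baryD_lineMap, hqD]
  have hm : m ∈ openSegment ℝ a b := by
    refine mem_openSegment_iff_exists.2 ⟨l * s, mul_pos hl0 hs0, by nlinarith, ?_⟩
    rw [hm_def, add_sub_cancel_left, smul_smul]
  have hmU_pos : 0 < baryU c u d m := by
    have hσ : baryU c u d x * baryD c u d m - baryD c u d x * baryU c u d m =
        (1 - l) * (baryU c u d x * baryD c u d a - baryD c u d x * baryU c u d a) := by
      rw [hmU, hmD']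
      ring
    have : baryU c u d x * baryD c u d m - baryD c u d x * baryU c u d m < 0 := by
      rw [hσ]
      exact mul_neg_of_pos_of_neg (by linarith) (by linarith)
    nlinarith [mul_nonneg hxU (hmD'.symm ▸ hmD : 0 ≤ baryD c u d m)]
  exact false_of_mem_openSegment_of_boundary hGP hSnc hK hCu hDu hu hab ha hb hac hau had hm
    hmU_pos (by rw [hmD']; exact hmD) (by rw [hmU, hmD']; linarith)
    (hedge.imp (fun h => by rw [hmD']; exact h) fun h => by rw [hmU, hmD']; linarith)

lemma exists_rayParam_lt_of_crossing (hGP : GenPos P) (hSP : ∀ e ∈ S, e.1 ∈ P ∧ e.2 ∈ P)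
    (hSnc : ∀ e ∈ S, ∀ f ∈ S, e ≠ f → ¬ PCross e.1 e.2 f.1 f.2)
    (hcu : inPos i c u) (hdu : inPos i d u) (hK : crossP (u - c) (d - c) ≠ 0)
    (hCu : CanSee S c u) (hDu : CanSee S d u) (hSS : SameSubNeg S i u c d) (hc : c ∈ P)
    (hu : u ∈ P) (hx : InTriangle c u d x) {a b : Pt} (hab : Constr S a b) {s t : ℝ}
    (hs0 : 0 < s) (hs1 : s < 1) (ht0 : 0 < t) (ht1 : t < 1)
    (hq : a + s • (b - a) = c + t • (x - c))
    (hside : baryU c u d x * baryD c u d a < baryD c u d x * baryU c u d a) :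
    ∃ y ∈ P, InTriangle c u d y ∧ rayParam c u d y < rayParam c u d x := by
  have ha := hab.mem_left hSP
  by_cases hau : a = u
  · subst hau
    exact (false_of_crossing_from_apex hSS hcu hdu hK hx hab hs0 ht0 ht1 hq).elim
  by_cases haT : InTriangle c u d a
  · exact ⟨a, ha, haT, rayParam_lt hx haT hside⟩
  have hac : a ≠ c := by
    rintro rfl
    simp at hside
  have had : a ≠ d := by
    rintro rfl
    simp only [baryU_d, baryD_d hK] at hside
    linarith [hx.1]
  exact (false_of_crossing_of_bary_neg hGP hSnc hK hCu hDu hu hx hab ha (hab.mem_right hSP) hac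
    hau had hs0 hs1 ht0 ht1 hq hside (bary_neg_of_not_inTriangle hGP hK (ne_of_inPos hcu) hc hu
    hx ha hac hau haT hside)).elim

lemma exists_rayParam_lt_of_not_canSee (hGP : GenPos P) (hSP : ∀ e ∈ S, e.1 ∈ P ∧ e.2 ∈ P)
    (hSnc : ∀ e ∈ S, ∀ f ∈ S, e ≠ f → ¬ PCross e.1 e.2 f.1 f.2)
    (hcu : inPos i c u) (hdu : inPos i d u) (hK : crossP (u - c) (d - c) ≠ 0)
    (hCu : CanSee S c u) (hDu : CanSee S d u) (hSS : SameSubNeg S i u c d) (hc : c ∈ P)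
    (hu : u ∈ P) (hxP : x ∈ P) (hx : InTriangle c u d x) (h : ¬ CanSee S c x) :
    ∃ y ∈ P, InTriangle c u d y ∧ rayParam c u d y < rayParam c u d x := by
  simp only [CanSee, not_or, not_forall, not_not] at h
  obtain ⟨hnC, e, he, hX⟩ := h
  have hxc : x ≠ c := by
    rintro rfl
    simpa using hx.2.1
  have hopp := hGP.crossP_mul_crossP_neg_of_pCross (hSP e he).1 (hSP e he).2 hc hxP hxc.symm hX
    (by rintro (⟨h1, h2⟩ | ⟨h1, h2⟩) <;> apply hnC
        · exact Or.inl (by rw [← h1, ← h2]; exact he)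
        · exact Or.inr (by rw [← h1, ← h2]; exact he))
  obtain ⟨q, hq1, hq2⟩ := hX
  obtain ⟨s, hs0, hs1, rfl⟩ := mem_openSegment_iff_exists.1 hq1
  obtain ⟨t, ht0, ht1, hq⟩ := mem_openSegment_iff_exists.1 hq2
  rw [crossP_eq_bary_apex hK x e.1, crossP_eq_bary_apex hK x e.2] at hopp
  have hσ : (baryU c u d x * baryD c u d e.1 - baryD c u d x * baryU c u d e.1) *
      (baryU c u d x * baryD c u d e.2 - baryD c u d x * baryU c u d e.2) < 0 := by
    refine neg_of_mul_neg_left (b := crossP (u - c) (d - c) ^ 2) ?_ (by positivity)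
    linarith
  -- one endpoint of the constraint lies on the same side of the line `cx` as `u`
  rcases lt_or_gt_of_ne (left_ne_zero_of_mul hσ.ne) with h1 | h1
  · exact exists_rayParam_lt_of_crossing hGP hSP hSnc hcu hdu hK hCu hDu hSS hc hu hx
      (Or.inl he) hs0 hs1 ht0 ht1 hq.symm (by linarith)
  · refine exists_rayParam_lt_of_crossing hGP hSP hSnc hcu hdu hK hCu hDu hSS hc hu hx
      (Or.inr he : Constr S e.2 e.1) (by linarith : 0 < 1 - s) (by linarith) ht0 ht1 ?_
      (by linarith [neg_of_mul_neg_right hσ h1.le])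
    rw [hq]
    ext <;> simp only [Prod.fst_add, Prod.snd_add, Prod.fst_sub, Prod.snd_sub, Prod.smul_fst,
      Prod.smul_snd, smul_eq_mul] <;> ring

end EmptyTriangle

theorem not_inPos_of_nearest {P : Set Pt} {S : Set (Pt × Pt)} {i : ℕ} {c u d : Pt}
    (hPfin : P.Finite) (hSP : ∀ e ∈ S, e.1 ∈ P ∧ e.2 ∈ P)
    (hSnc : ∀ e ∈ S, ∀ f ∈ S, e ≠ f → ¬ PCross e.1 e.2 f.1 f.2) (hGP : GenPos P)
    (hu : u ∈ P) (hc : c ∈ P) (hd : d ∈ P) (hcu : inPos i c u) (hdu : inPos i d u)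
    (hCu : CanSee S c u) (hDu : CanSee S d u) (hSS : SameSubNeg S i u c d)
    (hmin : ∀ x ∈ P, x ≠ c → inPos i c x → CanSee S c x → SameSubPos S i c u x →
      projLen i c u ≤ projLen i c x) :
    ¬ inPos i c d := by
  intro hcd
  have hK : crossP (u - c) (d - c) ≠ 0 := fun h =>
    (hGP.eq_or_eq_of_crossP_eq_zero hc hu hd (ne_of_inPos hcu).symm h).elim (ne_of_inPos hcd)
      (ne_of_inPos hdu).symm
  obtain ⟨x, ⟨hxP, hx⟩, hxmin⟩ := Set.exists_min_image {p | p ∈ P ∧ InTriangle c u d p}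
    (rayParam c u d) (hPfin.subset fun p hp => hp.1) ⟨d, hd, by simp [InTriangle, baryD_d hK]⟩
  have hsee : CanSee S c x := by
    by_contra h
    obtain ⟨y, hy, hyT, hlt⟩ := exists_rayParam_lt_of_not_canSee hGP hSP hSnc hcu hdu hK hCu
      hDu hSS hc hu hxP hx h
    exact (hxmin y ⟨hy, hyT⟩).not_gt hlt
  have hsub : SameSubPos S i c u x := by
    by_contra h
    obtain ⟨y, hy, hyT, hlt⟩ :=
      exists_rayParam_lt_of_not_sameSubPos hSP hSnc hcu hcd hK hDu hx h
    exact (hxmin y ⟨hy, hyT⟩).not_gt hlt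
  have hxpos := inPos_of_bary hcu hcd hK hx.1 hx.2.1
  exact (hmin x hxP (ne_of_inPos hxpos) hxpos hsee hsub).not_gt
    (projLen_lt_of_inTriangle hcd hdu hK hx)

lemma HEdge.canSee_and_minimal_of_inNeg {P : Set Pt} {S : Set (Pt × Pt)} {i : ℕ} {u v : Pt}
    (hi : i < 3) (h : HEdge P S u v) (hneg : inNeg i u v) :
    CanSee S v u ∧ ∀ x ∈ P, x ≠ v → inPos i v x → CanSee S v x → SameSubPos S i v u x →
      projLen i v u ≤ projLen i v x := by
  rcases h with ⟨-, -, j, hj, hpos, -⟩ | ⟨-, -, j, hj, hpos, hsee, hmin⟩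
  · exact (not_inPos_of_inNeg hi hj hpos hneg).elim
  · obtain rfl := inPos_unique hj hi hpos hneg
    exact ⟨hsee, hmin⟩

lemma SameSubNeg.symm {S : Set (Pt × Pt)} {i : ℕ} {u p q : Pt} (h : SameSubNeg S i u p q) :
    SameSubNeg S i u q p :=
  fun z hz hzc hlt => h z hz hzc (by rwa [mul_comm] at hlt)

lemma not_inPos_of_canonVert {P : Set Pt} {S : Set (Pt × Pt)} {i : ℕ} {u v w : Pt}
    (hPfin : P.Finite) (hSP : ∀ e ∈ S, e.1 ∈ P ∧ e.2 ∈ P)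
    (hSnc : ∀ e ∈ S, ∀ f ∈ S, e ≠ f → ¬ PCross e.1 e.2 f.1 f.2) (hGP : GenPos P) (hi : i < 3)
    (hv : CanonVert P S i u v) (hw : CanonVert P S i u w) (hvw : SameSubNeg S i u v w) :
    ¬ inPos i v w := by
  obtain ⟨hvP, hvE, hvN⟩ := hv
  obtain ⟨hwP, hwE, hwN⟩ := hw
  obtain ⟨hseeV, hminV⟩ := hvE.canSee_and_minimal_of_inNeg hi hvN
  have huP : u ∈ P := by
    rcases hvE with h | h
    exacts [h.1, h.2.1]
  exact not_inPos_of_nearest hPfin hSP hSnc hGP huP hvP hwP hvN hwN hseeV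
    (hwE.canSee_and_minimal_of_inNeg hi hwN).1 hvw hminV

/-- **Corollary 2.** If `v` and `w` are consecutive vertices along a canonical path of `u`
in the negative cone `C̄ᵘᵢ`, then `w` lies neither in the positive cone `Cᵛᵢ` nor in the
negative cone `C̄ᵛᵢ` of `v`. -/
theorem stmt_12 (P : Set Pt) (S : Set (Pt × Pt)) (hPfin : P.Finite)
    (hSP : ∀ c ∈ S, c.1 ∈ P ∧ c.2 ∈ P)
    (hSnc : ∀ c ∈ S, ∀ d ∈ S, c ≠ d → ¬ PCross c.1 c.2 d.1 d.2)
    (hGP : GenPos P)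
    (u v w : Pt) (i : ℕ) (hi : i < 3)
    (hcc : ConsecCanon P S i u v w ∨ ConsecCanon P S i u w v) :
    ¬ inPos i v w ∧ ¬ inNeg i v w := by
  obtain ⟨hv, hw, hvw⟩ : CanonVert P S i u v ∧ CanonVert P S i u w ∧ SameSubNeg S i u v w := by
    rcases hcc with ⟨hv, hw, hvw, -⟩ | ⟨hw, hv, hwv, -⟩
    exacts [⟨hv, hw, hvw⟩, ⟨hv, hw, hwv.symm⟩]
  exact ⟨not_inPos_of_canonVert hPfin hSP hSnc hGP hi hv hw hvw,
    not_inPos_of_canonVert hPfin hSP hSnc hGP hi hw hv hvw.symm⟩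

end CHT6
end
end
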